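/- Let S, A, E, Ŝ be discrete random variables on a finite probability space, where Ŝ is a deterministic function of A, S takes values in a finite set of size M ≥ 2, and suppose: (i) P(Ŝ ≠ S) ≤ δ, and (ii) H(S|E) ≥ (1−δ)H(S), for some 0 < δ < 1/2. Then (1 − 2δ)·H(S) − h(δ) − δ·log₂ M ≤ I(S;A|E), where h is the binary entropy function. -/

import Mathlib

open Finset

structure FinProb (Ω : Type) [Fintype Ω] where
  p : Ω → ℝ
  nonneg : ∀ ω, 0 ≤ p ω
  sum_one : ∑ ω, p ω = 1

namespace FinProb

variable {Ω : Type} [Fintype Ω] (μ : FinProb Ω)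

/-- P(X = x) -/
noncomputable def prob {α : Type} [DecidableEq α] (X : Ω → α) (x : α) : ℝ :=
  ∑ ω, if X ω = x then μ.p ω else 0

/-- Shannon entropy (base 2) of a random variable. -/
noncomputable def H {α : Type} [Fintype α] [DecidableEq α] (X : Ω → α) : ℝ :=
  -∑ x, μ.prob X x * Real.logb 2 (μ.prob X x)

/-- Mutual information I(X;Y). -/
noncomputable def I {α β : Type} [Fintype α] [DecidableEq α] [Fintype β] [DecidableEq β]
    (X : Ω → α) (Y : Ω → β) : ℝ :=
  μ.H X + μ.H Y - μ.H (fun ω => (X ω, Y ω))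

/-- Conditional entropy H(X|Z). -/
noncomputable def condH {α γ : Type} [Fintype α] [DecidableEq α] [Fintype γ] [DecidableEq γ]
    (X : Ω → α) (Z : Ω → γ) : ℝ :=
  μ.H (fun ω => (X ω, Z ω)) - μ.H Z

/-- Conditional mutual information I(X;Y|Z). -/
noncomputable def condI {α β γ : Type} [Fintype α] [DecidableEq α] [Fintype β] [DecidableEq β]
    [Fintype γ] [DecidableEq γ] (X : Ω → α) (Y : Ω → β) (Z : Ω → γ) : ℝ :=
  μ.condH X Z + μ.condH Y Z - μ.condH (fun ω => (X ω, Y ω)) Z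

/-- X and Y are conditionally independent given Z. -/
def CondIndep {α β γ : Type} [DecidableEq α] [DecidableEq β] [DecidableEq γ]
    (X : Ω → α) (Y : Ω → β) (Z : Ω → γ) : Prop :=
  ∀ x y z, μ.prob (fun ω => (X ω, Y ω, Z ω)) (x, y, z) * μ.prob Z z
    = μ.prob (fun ω => (X ω, Z ω)) (x, z) * μ.prob (fun ω => (Y ω, Z ω)) (y, z)

/-- X and Y are independent. -/
def Indep {α β : Type} [DecidableEq α] [DecidableEq β] (X : Ω → α) (Y : Ω → β) : Prop :=
  ∀ x y, μ.prob (fun ω => (X ω, Y ω)) (x, y) = μ.prob X x * μ.prob Y y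

end FinProb

/-- Binary entropy function (base 2). -/
noncomputable def binEnt (x : ℝ) : ℝ := -x * Real.logb 2 x - (1 - x) * Real.logb 2 (1 - x)

/-!
Since `I(S;A|E) = H(S|E) - H(S|A,E)`, secrecy bounds the first term below by `(1 - δ) H(S)`.
Dropping or coarsening the conditioning can only increase entropy, so
`H(S|A,E) ≤ H(S|A) ≤ H(S|Ŝ)`, which Fano's inequality bounds by `h(δ) + δ log₂ M`; finally
`δ H(S) ≥ 0`. Every entropy inequality used is an instance of Gibbs' inequality
`-∑ p log p ≤ -∑ p log q` for a sub-probability vector `q`.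
-/

lemma mul_logb_sub_mul_logb_le {p P q : ℝ} (hp : 0 ≤ p) (hpP : p ≤ P) (hq : 0 < p → 0 < q) :
    p * Real.logb 2 q - p * Real.logb 2 P ≤ p * ((q / P - 1) / Real.log 2) := by
  rcases hp.eq_or_lt with rfl | hp
  · simp
  have hP := hp.trans_le hpP
  rw [← mul_sub, ← Real.logb_div (hq hp).ne' hP.ne', Real.logb]
  gcongr
  exact Real.log_le_sub_one_of_pos (div_pos (hq hp) hP)

namespace FinProb

variable {Ω : Type} [Fintype Ω] (μ : FinProb Ω)

section
variable {α β γ : Type} [DecidableEq α] [DecidableEq β] [DecidableEq γ]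

lemma prob_nonneg (X : Ω → α) (x : α) : 0 ≤ μ.prob X x :=
  Finset.sum_nonneg fun ω _ => by split_ifs <;> simp [μ.nonneg ω]

lemma prob_le_one (X : Ω → α) (x : α) : μ.prob X x ≤ 1 :=
  μ.sum_one ▸ Finset.sum_le_sum fun ω _ => by split_ifs <;> simp [μ.nonneg ω]

lemma p_le_prob_apply (X : Ω → α) (ω : Ω) : μ.p ω ≤ μ.prob X (X ω) := by
  have := Finset.single_le_sum (f := fun ω' => if X ω' = X ω then μ.p ω' else 0)
    (fun ω' _ => by split_ifs <;> simp [μ.nonneg ω']) (Finset.mem_univ ω)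
  simpa [prob] using this

lemma prob_comp_of_injective {f : α → β} (hf : f.Injective) (X : Ω → α) (x : α) :
    μ.prob (fun ω => f (X ω)) (f x) = μ.prob X x := by
  simp only [prob, hf.eq_iff]

variable [Fintype α]

lemma sum_prob_mul (X : Ω → α) (f : α → ℝ) :
    ∑ x, μ.prob X x * f x = ∑ ω, μ.p ω * f (X ω) := by
  simp only [prob, Finset.sum_mul, ite_mul, zero_mul]
  rw [Finset.sum_comm]
  simp

lemma sum_prob (X : Ω → α) : ∑ x, μ.prob X x = 1 := by
  simpa [μ.sum_one] using μ.sum_prob_mul X fun _ => 1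

lemma sum_prob_pair (X : Ω → α) (Y : Ω → β) (y : β) :
    ∑ x, μ.prob (fun ω => (X ω, Y ω)) (x, y) = μ.prob Y y := by
  simp only [prob, Prod.mk.injEq, ite_and]
  rw [Finset.sum_comm]
  simp

lemma H_eq_neg_sum_mul_logb (X : Ω → α) :
    μ.H X = -∑ ω, μ.p ω * Real.logb 2 (μ.prob X (X ω)) := by
  rw [H, μ.sum_prob_mul X fun x => Real.logb 2 (μ.prob X x)]

lemma H_nonneg (X : Ω → α) : 0 ≤ μ.H X := by
  rw [H, neg_nonneg]
  exact Finset.sum_nonpos fun x _ => mul_nonpos_of_nonneg_of_nonpos (μ.prob_nonneg X x)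
    (Real.logb_nonpos one_lt_two (μ.prob_nonneg X x) (μ.prob_le_one X x))

lemma H_comp_of_injective [Fintype β] {f : α → β} (hf : f.Injective) (X : Ω → α) :
    μ.H (fun ω => f (X ω)) = μ.H X := by
  simp only [H_eq_neg_sum_mul_logb, μ.prob_comp_of_injective hf]

lemma condI_eq_condH_sub_condH [Fintype β] [Fintype γ] (X : Ω → α) (Y : Ω → β) (Z : Ω → γ) :
    μ.condI X Y Z = μ.condH X Z - μ.condH X (fun ω => (Y ω, Z ω)) := by
  have := μ.H_comp_of_injective (Equiv.prodAssoc α β γ).injective fun ω => ((X ω, Y ω), Z ω)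
  simp only [Equiv.prodAssoc_apply] at this
  simp only [condI, condH]
  linarith

/-- Gibbs' inequality, summed over sample points so that `q` only has to be positive where
`μ.p ω > 0`. -/
theorem H_le_neg_sum_mul_logb (X : Ω → α) (q : α → ℝ) (hq : ∀ x, 0 ≤ q x)
    (hq1 : ∑ x, q x ≤ 1) (hpos : ∀ ω, 0 < μ.p ω → 0 < q (X ω)) :
    μ.H X ≤ -∑ ω, μ.p ω * Real.logb 2 (q (X ω)) := by
  set P := μ.prob X
  have hgap : ∑ ω, μ.p ω * (q (X ω) / P (X ω) - 1) ≤ 0 :=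
    calc ∑ ω, μ.p ω * (q (X ω) / P (X ω) - 1) = ∑ x, P x * (q x / P x) - 1 := by
          simp only [mul_sub, mul_one, Finset.sum_sub_distrib, μ.sum_one, P, μ.sum_prob_mul]
      _ ≤ ∑ x, q x - 1 := by
          gcongr with x
          rcases (μ.prob_nonneg X x).eq_or_lt with h | h
          · simp [P, ← h, hq]
          · rw [mul_div_cancel₀ _ h.ne']
      _ ≤ 0 := by linarith
  have hlog := Finset.sum_le_sum fun ω (_ : ω ∈ univ) =>
    mul_logb_sub_mul_logb_le (μ.nonneg ω) (μ.p_le_prob_apply X ω) (hpos ω)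
  rw [Finset.sum_sub_distrib] at hlog
  simp only [← mul_div_assoc, ← Finset.sum_div] at hlog
  have := div_nonpos_of_nonpos_of_nonneg hgap (Real.log_nonneg one_le_two)
  rw [H_eq_neg_sum_mul_logb]
  linarith

theorem condH_le_neg_sum_mul_logb [Fintype β] (X : Ω → α) (Y : Ω → β) (g : α → β → ℝ)
    (hg : ∀ x y, 0 ≤ g x y) (hg1 : ∀ y, ∑ x, g x y ≤ 1)
    (hpos : ∀ ω, 0 < μ.p ω → 0 < g (X ω) (Y ω)) :
    μ.condH X Y ≤ -∑ ω, μ.p ω * Real.logb 2 (g (X ω) (Y ω)) := by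
  have hq1 : ∑ i : α × β, μ.prob Y i.2 * g i.1 i.2 ≤ 1 :=
    calc ∑ i : α × β, μ.prob Y i.2 * g i.1 i.2 = ∑ y, μ.prob Y y * ∑ x, g x y := by
          simp only [Fintype.sum_prod_type_right, Finset.mul_sum]
      _ ≤ ∑ y, μ.prob Y y * 1 := by
          gcongr with y
          exacts [μ.prob_nonneg Y y, hg1 y]
      _ = 1 := by simp [μ.sum_prob]
  have hH := μ.H_le_neg_sum_mul_logb (fun ω => (X ω, Y ω)) (fun i => μ.prob Y i.2 * g i.1 i.2)
    (fun i => mul_nonneg (μ.prob_nonneg Y _) (hg _ _)) hq1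
    (fun ω hω => mul_pos (hω.trans_le (μ.p_le_prob_apply Y ω)) (hpos ω hω))
  have hsplit : ∀ ω, μ.p ω * Real.logb 2 (μ.prob Y (Y ω) * g (X ω) (Y ω))
      = μ.p ω * Real.logb 2 (μ.prob Y (Y ω)) + μ.p ω * Real.logb 2 (g (X ω) (Y ω)) := by
    intro ω
    rcases (μ.nonneg ω).eq_or_lt with h | h
    · simp [← h]
    · rw [Real.logb_mul (h.trans_le (μ.p_le_prob_apply Y ω)).ne' (hpos ω h).ne', mul_add]
  simp only [hsplit, Finset.sum_add_distrib] at hH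
  rw [condH, H_eq_neg_sum_mul_logb μ Y]
  linarith

theorem condH_le_condH_comp [Fintype β] [Fintype γ] (X : Ω → α) (Y : Ω → β) (f : β → γ) :
    μ.condH X Y ≤ μ.condH X (fun ω => f (Y ω)) := by
  set Z := fun ω => f (Y ω)
  set PXZ := μ.prob fun ω => (X ω, Z ω)
  set PZ := μ.prob Z
  have hPXZ : ∀ ω, μ.p ω ≤ PXZ (X ω, Z ω) := μ.p_le_prob_apply _
  have hPZ : ∀ ω, μ.p ω ≤ PZ (Z ω) := μ.p_le_prob_apply Z
  have hsplit : ∀ ω, μ.p ω * Real.logb 2 (PXZ (X ω, f (Y ω)) / PZ (f (Y ω)))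
      = μ.p ω * Real.logb 2 (PXZ (X ω, Z ω)) - μ.p ω * Real.logb 2 (PZ (Z ω)) := by
    intro ω
    rcases (μ.nonneg ω).eq_or_lt with h | h
    · simp [← h]
    · rw [Real.logb_div (h.trans_le (hPXZ ω)).ne' (h.trans_le (hPZ ω)).ne', mul_sub]
  refine (μ.condH_le_neg_sum_mul_logb X Y (fun x y => PXZ (x, f y) / PZ (f y))
    (fun x y => div_nonneg (μ.prob_nonneg _ _) (μ.prob_nonneg _ _)) (fun y => ?_)
    (fun ω hω => div_pos (hω.trans_le (hPXZ ω)) (hω.trans_le (hPZ ω)))).trans_eq ?_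
  · rw [← Finset.sum_div, μ.sum_prob_pair X Z]
    exact div_self_le_one _
  · simp only [hsplit, Finset.sum_sub_distrib, condH, H_eq_neg_sum_mul_logb]
    ring

end

/-- Fano's inequality. The kernel `g x y = if y = x then 1 - δ else δ / M` turns Gibbs'
inequality into a bound affine in the error probability, whose slope is nonnegative as
`δ ≤ 1 / 2`. -/
theorem condH_le_binEnt_add_of_error_le {S : Type} [Fintype S] [DecidableEq S] (s f : Ω → S)
    {δ : ℝ} (hδ0 : 0 < δ) (hδ1 : δ ≤ 1 / 2)
    (herr : (∑ ω, if f ω ≠ s ω then μ.p ω else 0) ≤ δ) :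
    μ.condH s f ≤ binEnt δ + δ * Real.logb 2 (Fintype.card S) := by
  set M : ℝ := (Fintype.card S : ℝ)
  have hM : 1 ≤ M := by
    obtain ⟨ω, -, -⟩ :=
      Finset.exists_ne_zero_of_sum_ne_zero (s := univ) (f := μ.p) (by simp [μ.sum_one])
    exact Nat.one_le_cast.2 (Fintype.card_pos_iff.2 ⟨s ω⟩)
  set L₁ := Real.logb 2 (1 - δ)
  set L₂ := Real.logb 2 (δ / M)
  have hL₂ : L₂ = Real.logb 2 δ - Real.logb 2 M := Real.logb_div hδ0.ne' (by positivity)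
  have hg1 : ∀ y : S, ∑ x, (if y = x then 1 - δ else δ / M) ≤ 1 := by
    intro y
    calc ∑ x : S, (if y = x then 1 - δ else δ / M)
        ≤ ∑ x : S, ((if y = x then 1 - δ else 0) + δ / M) := by
          gcongr with x
          split_ifs <;> linarith [show 0 ≤ δ / M by positivity]
      _ = 1 := by
          simp only [Finset.sum_add_distrib, Finset.sum_ite_eq, Finset.mem_univ, if_true,
            Finset.sum_const, Finset.card_univ, nsmul_eq_mul]
          field_simp
          ring
  have hbound := μ.condH_le_neg_sum_mul_logb s f (fun x y => if y = x then 1 - δ else δ / M)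
    (fun x y => by split_ifs <;> [linarith; positivity]) hg1
    (fun ω _ => by split_ifs <;> [linarith; positivity])
  have hterm : ∀ ω, μ.p ω * Real.logb 2 (if f ω = s ω then 1 - δ else δ / M)
      = μ.p ω * L₁ - (if f ω ≠ s ω then μ.p ω else 0) * (L₁ - L₂) := by
    intro ω
    by_cases h : f ω = s ω
    · simp [h, L₁]
    · simp [h, L₂]
      ring
  simp only [hterm, Finset.sum_sub_distrib, ← Finset.sum_mul, μ.sum_one] at hbound
  have hslope : 0 ≤ L₁ - L₂ := by
    have := Real.logb_le_logb_of_le one_lt_two hδ0 (show δ ≤ 1 - δ by linarith)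
    have := Real.logb_nonneg one_lt_two hM
    linarith
  have hbinEnt : -L₁ + δ * (L₁ - L₂) = binEnt δ + δ * Real.logb 2 M := by
    rw [binEnt, hL₂]
    ring
  linarith [mul_le_mul_of_nonneg_right herr hslope]

end FinProb

theorem stmt9_general {Ω S A E : Type} [Fintype Ω] [Fintype S] [DecidableEq S]
    [Fintype A] [DecidableEq A] [Fintype E] [DecidableEq E]
    (μ : FinProb Ω) (s : Ω → S) (a : Ω → A) (e : Ω → E) (dec : A → S) (δ : ℝ)
    (hδ0 : 0 < δ) (hδ1 : δ < 1 / 2)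
    (hrel : (∑ ω, if dec (a ω) ≠ s ω then μ.p ω else 0) ≤ δ)
    (hsec : (1 - δ) * μ.H s ≤ μ.condH s e) :
    (1 - 2 * δ) * μ.H s - binEnt δ - δ * Real.logb 2 (Fintype.card S)
      ≤ μ.condI s a e := by
  have hfano := μ.condH_le_binEnt_add_of_error_le s (fun ω => dec (a ω)) hδ0 hδ1.le hrel
  have hdec : μ.condH s a ≤ μ.condH s (fun ω => dec (a ω)) := μ.condH_le_condH_comp s a dec
  have hcond : μ.condH s (fun ω => (a ω, e ω)) ≤ μ.condH s a :=
    μ.condH_le_condH_comp s _ Prod.fst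
  rw [μ.condI_eq_condH_sub_condH]
  linarith [mul_nonneg hδ0.le (μ.H_nonneg s)]

theorem stmt9 {Ω S A E : Type} [Fintype Ω] [Fintype S] [DecidableEq S]
    [Fintype A] [DecidableEq A] [Fintype E] [DecidableEq E]
    (μ : FinProb Ω) (s : Ω → S) (a : Ω → A) (e : Ω → E) (dec : A → S) (δ : ℝ)
    (hM : 2 ≤ Fintype.card S)
    (hδ0 : 0 < δ) (hδ1 : δ < 1 / 2)
    (hrel : (∑ ω, if dec (a ω) ≠ s ω then μ.p ω else 0) ≤ δ)
    (hsec : (1 - δ) * μ.H s ≤ μ.condH s e) :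
    (1 - 2 * δ) * μ.H s - binEnt δ - δ * Real.logb 2 (Fintype.card S)
      ≤ μ.condI s a e :=
  stmt9_general μ s a e dec δ hδ0 hδ1 hrel hsec
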